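/- arXiv:1408.0157 — 2 statements merged into one kernel-verified Lean document; each statement's English description precedes it below -/
import Mathlib

section
/- Let μ : (0,∞) → ℝ be Lebesgue integrable and let q : ℝ → ℂ be a Schwartz function. Define (E₂q)(x) = ∫₀^∞ ((q(x+y) + q(x−y) − 2q(x))/y²) μ(y) dy. Then E₂q is integrable on ℝ and its Fourier transform satisfies, for every ω ∈ ℝ, ∫_ℝ (E₂q)(x) e^{−iωx} dx = (∫₀^∞ (2(cos(ωy) − 1)/y²) μ(y) dy) · ∫_ℝ q(x) e^{−iωx} dx. -/
/-!
Writing `Δ_y f(x) = f(x + y) + f(x - y) - 2 f(x)`, two applications of the fundamental theorem of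
calculus and Tonelli give `‖Δ_y f‖₁ ≤ y² ‖f''‖₁`, so the integrand `Δ_y q(x) μ(y) / y²` is
absolutely integrable on `ℝ × (0, ∞)` with total mass at most `‖q''‖₁ ‖μ‖₁`. Fubini then lets us
take the Fourier transform inside the `y`-integral, where translation by `±y` multiplies the
transform by `e^{±iωy}`, so `Δ_y` becomes multiplication by `2 (cos ωy - 1)`.
-/

open MeasureTheory Set

section Differences

variable {E : Type*} [NormedAddCommGroup E] [NormedSpace ℝ E] [CompleteSpace E]
  {f f' f'' : ℝ → E} {y : ℝ}

theorem lintegral_enorm_comp_add_sub_le (hf : ∀ x, HasDerivAt f (f' x) x) (hf' : Continuous f')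
    (hy : 0 ≤ y) :
    ∫⁻ x, ‖f (x + y) - f x‖ₑ ≤ ENNReal.ofReal y * ∫⁻ x, ‖f' x‖ₑ := by
  have hpoint (x : ℝ) : ‖f (x + y) - f x‖ₑ ≤ ∫⁻ t in Ioc 0 y, ‖f' (x + t)‖ₑ := by
    have hftc : ∫ t in 0..y, f' (x + t) = f (x + y) - f x := by
      rw [intervalIntegral.integral_comp_add_left f' x, add_zero,
        intervalIntegral.integral_eq_sub_of_hasDerivAt (fun t _ => hf t)
          (hf'.intervalIntegrable _ _)]
    rw [← hftc, intervalIntegral.integral_of_le hy]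
    exact enorm_integral_le_lintegral_enorm _
  calc ∫⁻ x, ‖f (x + y) - f x‖ₑ ≤ ∫⁻ x, ∫⁻ t in Ioc 0 y, ‖f' (x + t)‖ₑ := lintegral_mono hpoint
    _ = ∫⁻ t in Ioc 0 y, ∫⁻ x, ‖f' (x + t)‖ₑ :=
      lintegral_lintegral_swap
        (hf'.comp (continuous_fst.add continuous_snd)).enorm.measurable.aemeasurable
    _ = ENNReal.ofReal y * ∫⁻ x, ‖f' x‖ₑ := by
      simp_rw [lintegral_add_right_eq_self (fun x => ‖f' x‖ₑ)]
      rw [setLIntegral_const, Real.volume_Ioc, sub_zero, mul_comm]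

/-- `Δ_y f = Δ'_y g` for the first difference `Δ'_y g = g (· + y) - g` of `g = f - f (· - y)`. -/
theorem lintegral_enorm_second_difference_le (hf : ∀ x, HasDerivAt f (f' x) x)
    (hf' : ∀ x, HasDerivAt f' (f'' x) x) (hf'' : Continuous f'') (hy : 0 ≤ y) :
    ∫⁻ x, ‖f (x + y) + f (x - y) - 2 • f x‖ₑ ≤ ENNReal.ofReal (y ^ 2) * ∫⁻ x, ‖f'' x‖ₑ := by
  have hcont' : Continuous f' := continuous_iff_continuousAt.2 fun x => (hf' x).continuousAt
  have hg (x : ℝ) : HasDerivAt (fun x => f x - f (x - y)) (f' x - f' (x - y)) x :=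
    (hf x).sub ((hf (x - y)).comp_sub_const x y)
  have hfirst := lintegral_enorm_comp_add_sub_le hg
    (hcont'.sub (hcont'.comp (continuous_sub_right y))) hy
  calc ∫⁻ x, ‖f (x + y) + f (x - y) - 2 • f x‖ₑ
      = ∫⁻ x, ‖(f (x + y) - f (x + y - y)) - (f x - f (x - y))‖ₑ := by
        congr! 3 with x
        rw [add_sub_cancel_right, two_smul]
        abel
    _ ≤ ENNReal.ofReal y * ∫⁻ x, ‖f' x - f' (x - y)‖ₑ := hfirst
    _ = ENNReal.ofReal y * ∫⁻ x, ‖f' (x + y) - f' x‖ₑ := by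
        rw [← lintegral_add_right_eq_self (fun x => ‖f' x - f' (x - y)‖ₑ) y]
        simp only [add_sub_cancel_right]
    _ ≤ ENNReal.ofReal y * (ENNReal.ofReal y * ∫⁻ x, ‖f'' x‖ₑ) := by
        gcongr
        exact lintegral_enorm_comp_add_sub_le hf' hf'' hy
    _ = ENNReal.ofReal (y ^ 2) * ∫⁻ x, ‖f'' x‖ₑ := by
        rw [← mul_assoc, ← ENNReal.ofReal_mul hy, sq]

end Differences

open Complex

theorem integral_comp_add_mul_cexp (f : ℝ → ℂ) (ω y : ℝ) :
    ∫ x, f (x + y) * cexp (-I * ω * x) = cexp (I * ω * y) * ∫ x, f x * cexp (-I * ω * x) := by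
  calc ∫ x, f (x + y) * cexp (-I * ω * x)
      = ∫ x, cexp (I * ω * y) * (f (x + y) * cexp (-I * ω * ↑(x + y))) := by
        congr 1 with x
        rw [mul_left_comm, ← Complex.exp_add]
        push_cast
        ring_nf
    _ = cexp (I * ω * y) * ∫ x, f x * cexp (-I * ω * x) := by
        rw [integral_const_mul, integral_add_right_eq_self (fun x => f x * cexp (-I * ω * x))]

theorem MeasureTheory.Integrable.mul_cexp_neg_I_mul {α : Type*} [MeasurableSpace α]
    {ν : Measure α} {F : α → ℂ} (hF : Integrable F ν) {φ : α → ℝ} (hφ : Measurable φ) (ω : ℝ) :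
    Integrable (fun a => F a * cexp (-I * ω * φ a)) ν :=
  hF.mul_bdd (by fun_prop) (c := 1) (ae_of_all _ fun a => by simp [norm_exp])

theorem integral_second_difference_mul_cexp {f : ℝ → ℂ} (hf : Integrable f) (ω y : ℝ) :
    ∫ x, (f (x + y) + f (x - y) - 2 * f x) * cexp (-I * ω * x)
      = 2 * (cos (ω * y) - 1) * ∫ x, f x * cexp (-I * ω * x) := by
  have hint (z : ℝ) : Integrable (fun x => f (x + z) * cexp (-I * ω * x)) :=
    (hf.comp_add_right z).mul_cexp_neg_I_mul measurable_id ω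
  have hint0 : Integrable (fun x => f x * cexp (-I * ω * x)) :=
    hf.mul_cexp_neg_I_mul measurable_id ω
  calc ∫ x, (f (x + y) + f (x - y) - 2 * f x) * cexp (-I * ω * x)
      = ∫ x, (f (x + y) * cexp (-I * ω * x) + f (x + -y) * cexp (-I * ω * x)
          - 2 * (f x * cexp (-I * ω * x))) := by
        simp_rw [← sub_eq_add_neg, sub_mul, add_mul, mul_assoc]
    _ = 2 * (cos (ω * y) - 1) * ∫ x, f x * cexp (-I * ω * x) := by
        have hsum : Integrable fun x =>
            f (x + y) * cexp (-I * ω * x) + f (x + -y) * cexp (-I * ω * x) :=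
          (hint y).add (hint (-y))
        rw [integral_sub hsum (hint0.const_mul 2),
          integral_add (hint y) (hint (-y)), integral_const_mul, integral_comp_add_mul_cexp,
          integral_comp_add_mul_cexp, cos]
        push_cast
        ring_nf

/-- The integrand of the operator `E₂`: `E₂ f x = ∫ y in Ioi 0, levyIntegrand f μ x y`. -/
noncomputable def levyIntegrand (f : ℝ → ℂ) (μ : ℝ → ℝ) (x y : ℝ) : ℂ :=
  (f (x + y) + f (x - y) - 2 * f x) / (y : ℂ) ^ 2 * μ y

section LevyIntegrand

variable {f f' f'' : ℝ → ℂ} {μ : ℝ → ℝ}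

theorem lintegral_enorm_levyIntegrand_le (hf : ∀ x, HasDerivAt f (f' x) x)
    (hf' : ∀ x, HasDerivAt f' (f'' x) x) (hf'' : Continuous f'') {y : ℝ} (hy : 0 < y) :
    ∫⁻ x, ‖levyIntegrand f μ x y‖ₑ ≤ (∫⁻ x, ‖f'' x‖ₑ) * ‖μ y‖ₑ := by
  have hcont : Continuous f := continuous_iff_continuousAt.2 fun x => (hf x).continuousAt
  have hy2 : ENNReal.ofReal (y ^ 2) ≠ 0 := by simpa using hy.ne'
  have hsecond := lintegral_enorm_second_difference_le hf hf' hf'' hy.le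
  simp only [nsmul_eq_mul, Nat.cast_ofNat] at hsecond
  calc ∫⁻ x, ‖levyIntegrand f μ x y‖ₑ
      = (∫⁻ x, ‖f (x + y) + f (x - y) - 2 * f x‖ₑ) * (‖μ y‖ₑ / ENNReal.ofReal (y ^ 2)) := by
        rw [← lintegral_mul_const _ (by fun_prop)]
        congr 1 with x
        rw [levyIntegrand, div_eq_mul_inv, mul_assoc, enorm_mul, enorm_mul,
          enorm_inv (by simpa using hy.ne'), mul_comm _ ‖(μ y : ℂ)‖ₑ, ← div_eq_mul_inv]
        simp only [← ofReal_norm, norm_real, norm_pow, Real.norm_eq_abs, sq_abs]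
    _ ≤ ENNReal.ofReal (y ^ 2) * (∫⁻ x, ‖f'' x‖ₑ) * (‖μ y‖ₑ / ENNReal.ofReal (y ^ 2)) := by
        gcongr
    _ = (∫⁻ x, ‖f'' x‖ₑ) * ‖μ y‖ₑ := by
        rw [mul_comm (ENNReal.ofReal _), mul_assoc,
          ENNReal.mul_div_cancel hy2 ENNReal.ofReal_ne_top]

theorem aestronglyMeasurable_levyIntegrand (hf : Continuous f)
    (hμ : AEStronglyMeasurable μ (volume.restrict (Ioi 0))) :
    AEStronglyMeasurable (Function.uncurry (levyIntegrand f μ))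
      (volume.prod (volume.restrict (Ioi 0))) := by
  have hnum : Continuous fun p : ℝ × ℝ => f (p.1 + p.2) + f (p.1 - p.2) - 2 * f p.1 := by
    fun_prop
  have hden : Continuous fun p : ℝ × ℝ => (p.2 : ℂ) ^ 2 := by fun_prop
  exact (hnum.aestronglyMeasurable.div₀ hden.aestronglyMeasurable).mul
    (continuous_ofReal.comp_aestronglyMeasurable hμ.comp_snd)

theorem integrable_levyIntegrand (hf : ∀ x, HasDerivAt f (f' x) x)
    (hf' : ∀ x, HasDerivAt f' (f'' x) x) (hf'' : Continuous f'') (hf''i : Integrable f'')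
    (hμ : IntegrableOn μ (Ioi 0)) :
    Integrable (Function.uncurry (levyIntegrand f μ)) (volume.prod (volume.restrict (Ioi 0))) := by
  have hcont : Continuous f := continuous_iff_continuousAt.2 fun x => (hf x).continuousAt
  have hmeas := aestronglyMeasurable_levyIntegrand hcont hμ.aestronglyMeasurable
  refine ⟨hmeas, ?_⟩
  calc ∫⁻ p, ‖Function.uncurry (levyIntegrand f μ) p‖ₑ ∂(volume.prod (volume.restrict (Ioi 0)))
      = ∫⁻ y in Ioi 0, ∫⁻ x, ‖levyIntegrand f μ x y‖ₑ := lintegral_prod_symm _ hmeas.enorm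
    _ ≤ ∫⁻ y in Ioi 0, (∫⁻ x, ‖f'' x‖ₑ) * ‖μ y‖ₑ :=
        setLIntegral_mono' measurableSet_Ioi fun y hy =>
          lintegral_enorm_levyIntegrand_le hf hf' hf'' hy
    _ = (∫⁻ x, ‖f'' x‖ₑ) * ∫⁻ y in Ioi 0, ‖μ y‖ₑ := lintegral_const_mul' _ _ hf''i.2.ne
    _ < ⊤ := ENNReal.mul_lt_top hf''i.2 hμ.2

theorem integral_levyIntegrand_mul_cexp (hf : Integrable f) (ω y : ℝ) :
    ∫ x, levyIntegrand f μ x y * cexp (-I * ω * x)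
      = ((2 * (Real.cos (ω * y) - 1) / y ^ 2 * μ y : ℝ) : ℂ) * ∫ x, f x * cexp (-I * ω * x) := by
  calc ∫ x, levyIntegrand f μ x y * cexp (-I * ω * x)
      = ∫ x, (μ y : ℂ) / (y : ℂ) ^ 2 *
          ((f (x + y) + f (x - y) - 2 * f x) * cexp (-I * ω * x)) := by
        congr 1 with x
        rw [levyIntegrand]
        ring
    _ = _ := by
        rw [integral_const_mul, integral_second_difference_mul_cexp hf]
        push_cast
        ring

end LevyIntegrand

theorem stmt5 (μ : ℝ → ℝ) (hμ : IntegrableOn μ (Set.Ioi 0)) (q : SchwartzMap ℝ ℂ) :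
    Integrable (fun x : ℝ =>
      ∫ y in Set.Ioi (0:ℝ), ((q (x + y) + q (x - y) - 2 * q x) / (y:ℂ)^2) * (μ y : ℂ)) ∧
    ∀ ω : ℝ,
      ∫ x : ℝ,
          (∫ y in Set.Ioi (0:ℝ), ((q (x + y) + q (x - y) - 2 * q x) / (y:ℂ)^2) * (μ y : ℂ)) *
            Complex.exp (-Complex.I * ω * x)
        = ((∫ y in Set.Ioi (0:ℝ), (2 * (Real.cos (ω * y) - 1) / y^2) * μ y : ℝ) : ℂ) *
          ∫ x : ℝ, q x * Complex.exp (-Complex.I * ω * x) := by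
  let q' := SchwartzMap.derivCLM ℝ ℂ q
  let q'' := SchwartzMap.derivCLM ℝ ℂ q'
  have hP : Integrable (Function.uncurry (levyIntegrand q μ))
      (volume.prod (volume.restrict (Ioi 0))) :=
    integrable_levyIntegrand (f' := q') q.hasDerivAt q'.hasDerivAt q''.continuous q''.integrable hμ
  refine ⟨hP.integral_prod_left, fun ω => ?_⟩
  calc ∫ x, (∫ y in Ioi 0, levyIntegrand q μ x y) * cexp (-I * ω * x)
      = ∫ x, ∫ y in Ioi 0, levyIntegrand q μ x y * cexp (-I * ω * x) := by
        simp_rw [integral_mul_const]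
    _ = ∫ y in Ioi 0, ∫ x, levyIntegrand q μ x y * cexp (-I * ω * x) :=
        integral_integral_swap (hP.mul_cexp_neg_I_mul measurable_fst ω)
    _ = ∫ y in Ioi 0, ((2 * (Real.cos (ω * y) - 1) / y ^ 2 * μ y : ℝ) : ℂ) *
          ∫ x, q x * cexp (-I * ω * x) := by
        simp_rw [integral_levyIntegrand_mul_cexp q.integrable]
    _ = _ := by rw [integral_mul_const, integral_complex_ofReal]
end

section
/- Let r > 0. Define G_r(ν) = ∫_0^ν sinc(η)·exp(−η²/(2r²)) dη for ν ∈ ℝ and F_SG(ω) = ∫_ℝ sinc(x)·exp(−x²/(2r²))·e^{−iωx} dx, where sinc(x) = sin(πx)/(πx) for x ≠ 0 and sinc(0) = 1. Then for every integer k, the function ω ↦ F_SG(ω)·sinc(ω/(2π))·e^{iω/2}·e^{ikω} is integrable on ℝ and G_r(k+1) − G_r(k) = (1/(2π)) ∫_ℝ F_SG(ω)·sinc(ω/(2π))·e^{iω/2}·e^{ikω} dω. -/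
/-!
With the convention `𝓕 f ξ = ∫ f x e^{-2πixξ} dx`, the sinc-Gauss function `sincg x · e^{-x²/(2r²)}`
is `𝓕 φ` for the smoothed box `φ = 1_{[-1/2,1/2]} ⋆ γ`, `γ` the Gaussian with
`𝓕 γ x = e^{-x²/(2r²)}`. Since `φ` is continuous and integrable, Fourier inversion gives
`F ω = φ (-ω/2π)`, while `sinc(ω/2π) e^{iω/2} e^{ikω} = 𝓕 1_{[k,k+1]} (-ω/2π)`. Hence
`G (k+1) - G k = ∫ 𝓕 φ · 1_{[k,k+1]} = ∫ φ · 𝓕 1_{[k,k+1]}` by self-adjointness of `𝓕`, and the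
substitution `ω = -2πx` gives the claim; the integrand is integrable because `φ` is and
`𝓕 1_{[k,k+1]}` is bounded and continuous.
-/

open MeasureTheory

noncomputable def sincg (x : ℝ) : ℝ :=
  if x = 0 then 1 else Real.sin (Real.pi * x) / (Real.pi * x)

open Real Complex Set FourierTransform
open scoped Convolution

section Fourier

variable {V : Type*} [NormedAddCommGroup V] [InnerProductSpace ℝ V] [FiniteDimensional ℝ V]
  [MeasurableSpace V] [BorelSpace V] {f g : V → ℂ}

theorem integral_fourier_mul_eq_of_integrable (hf : Integrable f) (hg : Integrable g) :
    ∫ ξ, 𝓕 f ξ * g ξ = ∫ x, f x * 𝓕 g x := by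
  simpa using! VectorFourier.integral_bilin_fourierIntegral_eq_flip (.mul ℂ ℂ) (L := innerₗ V)
    continuous_fourierChar continuous_inner hf hg

theorem MeasureTheory.Integrable.mul_fourier (hf : Integrable f) (hg : Integrable g) :
    Integrable fun x => f x * 𝓕 g x :=
  hf.mul_bdd (VectorFourier.fourierIntegral_continuous continuous_fourierChar continuous_inner
    hg).aestronglyMeasurable
    (.of_forall fun _ => VectorFourier.norm_fourierIntegral_le_integral_norm _ _ _ _ _)

theorem Continuous.fourier_fourier_eq_neg (hc : Continuous f) (hf : Integrable f)
    (hFf : Integrable (𝓕 f)) (y : V) : 𝓕 (𝓕 f) y = f (-y) := calc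
  𝓕 (𝓕 f) y = 𝓕⁻ (𝓕 f) (-y) := by rw [fourierInv_eq_fourier_neg, neg_neg]
  _ = f (-y) := by rw [hc.fourierInv_fourier_eq hf hFf]

end Fourier

theorem fourier_div_two_pi (f : ℝ → ℂ) (ω : ℝ) :
    𝓕 f (ω / (2 * π)) = ∫ x, f x * cexp (-I * ω * x) := by
  rw [fourier_real_eq_integral_exp_smul]
  congr 1 with x
  rw [smul_eq_mul, mul_comm]
  congr 2
  push_cast
  field_simp

theorem sincg_eq_sinc (x : ℝ) : sincg x = sinc (π * x) := by
  simp [sincg, sinc, pi_ne_zero]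

theorem sincg_neg (x : ℝ) : sincg (-x) = sincg x := by
  rw [sincg_eq_sinc, sincg_eq_sinc, mul_neg, sinc_neg]

theorem continuous_sincg : Continuous sincg := by
  rw [show sincg = fun x => sinc (π * x) from funext sincg_eq_sinc]
  exact continuous_sinc.comp (continuous_const_mul π)

theorem MeasureTheory.Integrable.sincg_mul {g : ℝ → ℝ} (hg : Integrable g) :
    Integrable fun x => sincg x * g x :=
  hg.bdd_mul continuous_sincg.aestronglyMeasurable
    (.of_forall fun x => by simpa [sincg_eq_sinc] using abs_sinc_le_one (π * x))

theorem integrable_sincg_mul_gaussian {r : ℝ} (hr : r ≠ 0) :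
    Integrable fun x => sincg x * rexp (-(x ^ 2 / (2 * r ^ 2))) :=
  ((integrable_exp_neg_mul_sq (b := (2 * r ^ 2)⁻¹) (by positivity)).congr
    (.of_forall fun x => by ring_nf)).sincg_mul

noncomputable def unitBox (a : ℝ) : ℝ → ℂ := (Icc a (a + 1)).indicator 1

theorem integrable_unitBox (a : ℝ) : Integrable (unitBox a) :=
  (integrable_indicator_iff measurableSet_Icc).2 (integrableOn_const (by simp))

theorem integral_mul_unitBox (f : ℝ → ℂ) (a : ℝ) :
    ∫ x, f x * unitBox a x = ∫ x in a..a + 1, f x := by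
  rw [intervalIntegral.integral_of_le (by linarith), ← integral_Icc_eq_integral_Ioc,
    ← integral_indicator measurableSet_Icc]
  congr 1 with x
  simp [unitBox, indicator_apply]

theorem fourier_unitBox (a x : ℝ) :
    𝓕 (unitBox a) x = sincg x * cexp (↑(-(π * (2 * a + 1) * x)) * I) := by
  have hint : 𝓕 (unitBox a) x = ∫ v in a..a + 1, cexp ((-2 * π * x * I) * v) := by
    rw [fourier_real_eq_integral_exp_smul, ← integral_mul_unitBox]
    congr 1 with v
    rw [smul_eq_mul]; push_cast; ring_nf
  rw [hint]
  rcases eq_or_ne x 0 with rfl | hx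
  · simp [sincg]
  have hc : -2 * π * x * I ≠ 0 := by simp [hx, pi_ne_zero]
  rw [integral_exp_mul_complex hc, sincg, if_neg hx]
  push_cast
  rw [Complex.sin]
  field_simp
  rw [I_sq, neg_one_mul, neg_mul, sub_mul, ← Complex.exp_add, ← Complex.exp_add]
  ring_nf

theorem fourier_unitBox_div_neg_two_pi (a ω : ℝ) :
    𝓕 (unitBox a) (ω / -(2 * π)) =
      sincg (ω / (2 * π)) * (cexp (I * ω / 2) * cexp (I * a * ω)) := by
  rw [fourier_unitBox, div_neg, sincg_neg, ← Complex.exp_add]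
  congr 2
  push_cast
  field_simp
  ring

noncomputable def gaussKernel (b t : ℝ) : ℂ := ↑(√b * rexp (-π * b * t ^ 2))

theorem continuous_gaussKernel (b : ℝ) : Continuous (gaussKernel b) := by
  unfold gaussKernel; fun_prop

section GaussKernel

variable {b : ℝ}

theorem integrable_gaussKernel (hb : 0 < b) : Integrable (gaussKernel b) :=
  ((integrable_exp_neg_mul_sq (mul_pos pi_pos hb)).const_mul √b).ofReal.congr
    (.of_forall fun t => by simp [gaussKernel])

theorem norm_gaussKernel_le (hb : 0 ≤ b) (t : ℝ) : ‖gaussKernel b t‖ ≤ √b := by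
  rw [gaussKernel, norm_real, norm_mul, norm_of_nonneg (sqrt_nonneg b),
    norm_of_nonneg (exp_pos _).le]
  exact mul_le_of_le_one_right (sqrt_nonneg b)
    (exp_le_one_iff.2 (by nlinarith [mul_nonneg (mul_nonneg pi_pos.le hb) (sq_nonneg t)]))

theorem fourier_gaussKernel (hb : 0 < b) (x : ℝ) :
    𝓕 (gaussKernel b) x = ↑(rexp (-π / b * x ^ 2)) := by
  have hsmul : gaussKernel b = (√b : ℂ) • fun t : ℝ => cexp (-π * (b : ℂ) * t ^ 2) := by
    ext t; simp [gaussKernel]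
  have hsqrt : (b : ℂ) ^ (1 / 2 : ℂ) = √b := by
    rw [sqrt_eq_rpow, ofReal_cpow hb.le]; norm_num
  rw [hsmul, show 𝓕 ((√b : ℂ) • fun t : ℝ => cexp (-π * (b : ℂ) * t ^ 2)) x =
      ((√b : ℂ) • 𝓕 fun t : ℝ => cexp (-π * (b : ℂ) * t ^ 2)) x
      from congrFun (VectorFourier.fourierIntegral_const_smul _ _ _ _ _) x,
    fourier_gaussian_pi (by simpa), Pi.smul_apply, smul_eq_mul, hsqrt]
  have : (√b : ℂ) ≠ 0 := by simp [hb.ne', hb.le]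
  field_simp
  push_cast
  ring_nf

end GaussKernel

noncomputable def boxGauss (b : ℝ) : ℝ → ℂ :=
  unitBox (-1 / 2) ⋆[ContinuousLinearMap.mul ℂ ℂ] gaussKernel b

section BoxGauss

variable {b : ℝ}

theorem integrable_boxGauss (hb : 0 < b) : Integrable (boxGauss b) :=
  (integrable_unitBox _).integrable_convolution _ (integrable_gaussKernel hb)

theorem continuous_boxGauss (hb : 0 < b) : Continuous (boxGauss b) :=
  BddAbove.continuous_convolution_right_of_integrable _
    ⟨√b, forall_mem_range.2 (norm_gaussKernel_le hb.le)⟩ (integrable_unitBox _)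
    (continuous_gaussKernel b)

theorem fourier_boxGauss (hb : 0 < b) (x : ℝ) :
    𝓕 (boxGauss b) x = ↑(sincg x * rexp (-π / b * x ^ 2)) := by
  rw [boxGauss, Real.fourier_mul_convolution_eq (integrable_unitBox _)
    (integrable_gaussKernel hb), fourier_unitBox, fourier_gaussKernel hb]
  norm_num

theorem fourier_boxGauss_two_pi_mul_sq {r : ℝ} (hr : r ≠ 0) :
    𝓕 (boxGauss (2 * π * r ^ 2)) = fun x => ↑(sincg x * rexp (-(x ^ 2 / (2 * r ^ 2)))) := by
  ext x
  rw [fourier_boxGauss (by positivity)]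
  congr 3
  field_simp

end BoxGauss

theorem stmt18 (r : ℝ) (hr : 0 < r)
    (G : ℝ → ℝ)
    (hG : ∀ ν : ℝ, G ν = ∫ η in (0:ℝ)..ν, sincg η * Real.exp (-(η^2 / (2 * r^2))))
    (F : ℝ → ℂ)
    (hF : ∀ ω : ℝ, F ω = ∫ x : ℝ, ((sincg x * Real.exp (-(x^2 / (2 * r^2))) : ℝ) : ℂ) *
        Complex.exp (-Complex.I * ω * x)) :
    ∀ k : ℤ,
      Integrable (fun ω : ℝ => F ω * (sincg (ω / (2 * Real.pi)) : ℝ) *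
        Complex.exp (Complex.I * ω / 2) * Complex.exp (Complex.I * k * ω)) ∧
      ((G (k + 1) - G k : ℝ) : ℂ)
        = (1 / (2 * Real.pi)) *
          ∫ ω : ℝ, F ω * (sincg (ω / (2 * Real.pi)) : ℝ) *
            Complex.exp (Complex.I * ω / 2) * Complex.exp (Complex.I * k * ω) := by
  intro k
  have hb : 0 < 2 * π * r ^ 2 := by positivity
  set φ := boxGauss (2 * π * r ^ 2)
  have hFφ := fourier_boxGauss_two_pi_mul_sq hr.ne'
  have hf := integrable_sincg_mul_gaussian hr.ne'
  have hF' : ∀ ω, F ω = φ (ω / -(2 * π)) := fun ω => by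
    rw [hF, ← fourier_div_two_pi, ← hFφ, (continuous_boxGauss hb).fourier_fourier_eq_neg
      (integrable_boxGauss hb) (hFφ ▸ hf.ofReal), div_neg]
  have hintegrand : (fun ω : ℝ => F ω * (sincg (ω / (2 * π)) : ℝ) *
      cexp (I * ω / 2) * cexp (I * k * ω)) =
      fun ω => φ (ω / -(2 * π)) * 𝓕 (unitBox k) (ω / -(2 * π)) := by
    ext ω
    rw [hF', mul_assoc, mul_assoc, fourier_unitBox_div_neg_two_pi, ofReal_intCast]
  refine ⟨hintegrand ▸ ((integrable_boxGauss hb).mul_fourier (integrable_unitBox k)).comp_div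
    (by simp [pi_ne_zero]), ?_⟩
  calc ((G (k + 1) - G k : ℝ) : ℂ)
      = ∫ x in (k : ℝ)..k + 1, ((sincg x * rexp (-(x ^ 2 / (2 * r ^ 2))) : ℝ) : ℂ) := by
        rw [hG, hG, intervalIntegral.integral_interval_sub_left hf.intervalIntegrable
          hf.intervalIntegrable, intervalIntegral.integral_ofReal]
    _ = ∫ x, 𝓕 φ x * unitBox k x := by rw [integral_mul_unitBox, hFφ]
    _ = ∫ x, φ x * 𝓕 (unitBox k) x :=
        integral_fourier_mul_eq_of_integrable (integrable_boxGauss hb) (integrable_unitBox k)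
    _ = _ := by
        rw [hintegrand, Measure.integral_comp_div (fun x => φ x * 𝓕 (unitBox k) x), abs_neg,
          abs_of_pos (by positivity), real_smul]
        push_cast
        field_simp
end
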